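/- arXiv:2202.04428 — 4 statements merged into one kernel-verified Lean document; each statement's English description precedes it below -/
import Mathlib

section
/- For any non-negative real numbers a₁, ..., aₙ with all partial sums positive where needed, Σ_{i=1}^{n} a_i / √(Σ_{j=1}^{i} a_j) ≤ 2 √(Σ_{i=1}^{n} a_i), with the convention that terms with zero denominator are zero. -/
lemma aux_step (s a : ℝ) (hs : 0 ≤ s) (ha : 0 ≤ a) :
    a / Real.sqrt (s + a) ≤ 2 * (Real.sqrt (s + a) - Real.sqrt s) := by
  rcases eq_or_lt_of_le ha with h | h
  · simp only [← h, add_zero, zero_div]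
    nlinarith [Real.sqrt_nonneg s]
  · have ht : 0 < s + a := by linarith
    have hst : Real.sqrt (s + a) > 0 := Real.sqrt_pos.mpr ht
    rw [div_le_iff₀ hst]
    have h1 : Real.sqrt (s+a) ^ 2 = s + a := Real.sq_sqrt ht.le
    have h2 : Real.sqrt s ^ 2 = s := Real.sq_sqrt hs
    nlinarith [sq_nonneg (Real.sqrt (s+a) - Real.sqrt s), Real.sqrt_nonneg s, Real.sqrt_nonneg (s+a)]

/-- For nonnegative reals, `Σ_i a_i / √(Σ_{j ≤ i} a_j) ≤ 2 √(Σ_i a_i)`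
(terms with zero denominator are zero, as in Lean's convention `x / 0 = 0`). -/
theorem sum_div_sqrt_partial_sum_le (n : ℕ) (a : ℕ → ℝ) (ha : ∀ i, 0 ≤ a i) :
    ∑ i ∈ Finset.range n, a i / Real.sqrt (∑ j ∈ Finset.range (i+1), a j)
      ≤ 2 * Real.sqrt (∑ i ∈ Finset.range n, a i) := by
  induction n with
  | zero => simp
  | succ n ih =>
    rw [Finset.sum_range_succ, Finset.sum_range_succ (f := a)]
    have hs : 0 ≤ ∑ i ∈ Finset.range n, a i := Finset.sum_nonneg fun i _ => ha i
    have := aux_step (∑ i ∈ Finset.range n, a i) (a n) hs (ha n)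
    linarith
end

section
/- (AdaGrad-Norm regret bound) Let K ⊆ ℝ^d be a closed convex set with diameter D (i.e., ‖x − y‖ ≤ D for all x, y ∈ K). Let g₁, ..., g_T ∈ ℝ^d be arbitrary vectors and define iterates w_{t+1} = Π_K(w_t − η_t g_t) with η_t = (D/√2) / √(Σ_{k=1}^{t} ‖g_k‖²), starting from any w₁ ∈ K. Then for any w* ∈ K, Σ_{t=1}^{T} g_t^⊤(w_t − w*) ≤ D √(2 Σ_{t=1}^{T} ‖g_t‖²). -/
open scoped RealInnerProductSpace
open Finset

/-!
Projection onto a convex set does not increase the distance to points of the set, which gives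
`‖w_{t+1} - w*‖² ≤ ‖w_t - w*‖² - 2 η_t ⟪g_t, w_t - w*⟫ + η_t² ‖g_t‖²`.
Dividing by `2 η_t` and summing, the distance terms telescope against the increasing weights
`1 / η_t` to at most `D² / (2 η_{T-1})`, while the gradient terms are controlled by
`∑_t ‖g_t‖² / √(∑_{k ≤ t} ‖g_k‖²) ≤ 2 √(∑_t ‖g_t‖²)`.
-/

section Projection

variable {E : Type*} [NormedAddCommGroup E] [InnerProductSpace ℝ E]

theorem real_inner_sub_le_zero_of_forall_norm_sub_le {K : Set E} (hK : Convex ℝ K) {u p : E}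
    (hp : p ∈ K) (hmin : ∀ y ∈ K, ‖p - u‖ ≤ ‖y - u‖) {y : E} (hy : y ∈ K) :
    ⟪u - p, y - p⟫ ≤ 0 := by
  have : Nonempty K := ⟨⟨p, hp⟩⟩
  refine (norm_eq_iInf_iff_real_inner_le_zero hK hp).1 (le_antisymm ?_ ?_) y hy
  · exact le_ciInf fun q => by simpa only [norm_sub_rev] using hmin q q.2
  · exact ciInf_le (f := fun q : K => ‖u - q‖) ⟨0, by rintro _ ⟨q, rfl⟩; positivity⟩ ⟨p, hp⟩

theorem norm_sub_sq_le_of_forall_norm_sub_le {K : Set E} (hK : Convex ℝ K) {u p : E}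
    (hp : p ∈ K) (hmin : ∀ y ∈ K, ‖p - u‖ ≤ ‖y - u‖) {y : E} (hy : y ∈ K) :
    ‖p - y‖ ^ 2 ≤ ‖u - y‖ ^ 2 := by
  have hobtuse := real_inner_sub_le_zero_of_forall_norm_sub_le hK hp hmin hy
  have hexpand : ‖u - y‖ ^ 2 = ‖u - p‖ ^ 2 - 2 * ⟪u - p, y - p⟫ + ‖p - y‖ ^ 2 := by
    rw [← sub_add_sub_cancel u p y, norm_add_sq_real, ← neg_sub y p, inner_neg_right]
    ring
  nlinarith [sq_nonneg ‖u - p‖]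

theorem norm_proj_gradient_step_sub_sq_le {K : Set E} (hK : Convex ℝ K) (proj : E → E)
    (hproj : ∀ x, proj x ∈ K ∧ ∀ y ∈ K, ‖proj x - x‖ ≤ ‖y - x‖) (w g : E) (η : ℝ)
    {y : E} (hy : y ∈ K) :
    ‖proj (w - η • g) - y‖ ^ 2 ≤ ‖w - y‖ ^ 2 - 2 * η * ⟪g, w - y⟫ + η ^ 2 * ‖g‖ ^ 2 := by
  calc ‖proj (w - η • g) - y‖ ^ 2 ≤ ‖w - η • g - y‖ ^ 2 :=
        norm_sub_sq_le_of_forall_norm_sub_le hK (hproj _).1 (hproj _).2 hy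
    _ = ‖(w - y) - η • g‖ ^ 2 := by rw [sub_right_comm]
    _ = _ := by
        rw [norm_sub_sq_real, real_inner_smul_right, real_inner_comm, norm_smul,
          Real.norm_eq_abs, mul_pow, sq_abs]
        ring

end Projection

theorem sum_mul_sub_succ_le_mul_sub {a b : ℕ → ℝ} {B : ℝ} (hb : Monotone b) (hb0 : 0 ≤ b 0)
    (haB : ∀ t, a t ≤ B) (T : ℕ) :
    ∑ t ∈ range T, b (t + 1) * (a t - a (t + 1)) ≤ b T * (B - a T) := by
  induction T with
  | zero => simpa using mul_nonneg hb0 (sub_nonneg.2 (haB 0))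
  | succ T ih =>
    have hstep : b T * (B - a T) ≤ b (T + 1) * (B - a T) :=
      mul_le_mul_of_nonneg_right (hb T.le_succ) (sub_nonneg.2 (haB T))
    rw [sum_range_succ]
    linarith

theorem div_sqrt_add_le {A x : ℝ} (hA : 0 ≤ A) (hx : 0 ≤ x) :
    x / √(A + x) ≤ 2 * (√(A + x) - √A) := by
  rcases (add_nonneg hA hx).eq_or_lt with h0 | h0
  · rw [← h0, Real.sqrt_zero, div_zero]
    have : A = 0 := by linarith
    simp [this]
  · have hmono : √A ≤ √(A + x) := Real.sqrt_le_sqrt (by linarith)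
    rw [div_le_iff₀ (Real.sqrt_pos.2 h0)]
    nlinarith [Real.sq_sqrt h0.le, Real.sq_sqrt hA, Real.sqrt_nonneg A]

theorem sum_div_sqrt_sum_range_succ_le {f : ℕ → ℝ} (hf : ∀ t, 0 ≤ f t) (T : ℕ) :
    ∑ t ∈ range T, f t / √(∑ k ∈ range (t + 1), f k) ≤ 2 * √(∑ k ∈ range T, f k) := by
  induction T with
  | zero => simp
  | succ T ih =>
    have hstep := div_sqrt_add_le (sum_nonneg fun k (_ : k ∈ range T) => hf k) (hf T)
    rw [sum_range_succ, sum_range_succ f]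
    linarith

section Regret

variable {E : Type*} [NormedAddCommGroup E] [InnerProductSpace ℝ E]

theorem inner_le_of_proj_gradient_step {K : Set E} (hK : Convex ℝ K) (proj : E → E)
    (hproj : ∀ x, proj x ∈ K ∧ ∀ y ∈ K, ‖proj x - x‖ ≤ ‖y - x‖) {c S : ℝ} (hc : 0 < c)
    {w g y : E} (hy : y ∈ K) (hgS : ‖g‖ ^ 2 ≤ S) :
    ⟪g, w - y⟫ ≤ √S / (2 * c) * (‖w - y‖ ^ 2 - ‖proj (w - (c / √S) • g) - y‖ ^ 2)
      + c / 2 * (‖g‖ ^ 2 / √S) := by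
  rcases le_or_gt S 0 with hS | hS
  · have hg : g = 0 := by
      rw [← norm_eq_zero]
      nlinarith [norm_nonneg g]
    simp [hg, Real.sqrt_eq_zero'.2 hS]
  have hs : 0 < √S := Real.sqrt_pos.2 hS
  have hstep := norm_proj_gradient_step_sub_sq_le hK proj hproj w g (c / √S) hy
  calc ⟪g, w - y⟫
      = √S / (2 * c) * (2 * (c / √S) * ⟪g, w - y⟫) := by field_simp
    _ ≤ √S / (2 * c) * (‖w - y‖ ^ 2 - ‖proj (w - (c / √S) • g) - y‖ ^ 2
          + (c / √S) ^ 2 * ‖g‖ ^ 2) := by gcongr; linarith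
    _ = _ := by field_simp

/-- The scale `c = D / √2` minimises `D² / (2c) + c`. -/
theorem adagrad_norm_regret_le {K : Set E} (hK : Convex ℝ K) {D : ℝ}
    (hD : ∀ x ∈ K, ∀ y ∈ K, ‖x - y‖ ≤ D) (proj : E → E)
    (hproj : ∀ x, proj x ∈ K ∧ ∀ y ∈ K, ‖proj x - x‖ ≤ ‖y - x‖) {c : ℝ} (hc : 0 < c)
    (g w : ℕ → E) (hw0 : w 0 ∈ K)
    (hwrec : ∀ t, w (t + 1) = proj (w t - (c / √(∑ k ∈ range (t + 1), ‖g k‖ ^ 2)) • g t))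
    {y : E} (hy : y ∈ K) (T : ℕ) :
    ∑ t ∈ range T, ⟪g t, w t - y⟫ ≤ (D ^ 2 / (2 * c) + c) * √(∑ t ∈ range T, ‖g t‖ ^ 2) := by
  set F : ℕ → ℝ := fun n => ∑ k ∈ range n, ‖g k‖ ^ 2
  set a : ℕ → ℝ := fun t => ‖w t - y‖ ^ 2
  have hwK : ∀ t, w t ∈ K
    | 0 => hw0
    | t + 1 => hwrec t ▸ (hproj _).1
  have haD : ∀ t, a t ≤ D ^ 2 := fun t =>
    pow_le_pow_left₀ (norm_nonneg _) (hD _ (hwK t) y hy) 2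
  have hF : Monotone fun n => √(F n) := fun m n hmn =>
    Real.sqrt_le_sqrt (sum_le_sum_of_subset_of_nonneg (range_mono hmn) fun k _ _ => sq_nonneg _)
  have hstep : ∀ t, ⟪g t, w t - y⟫ ≤
      1 / (2 * c) * (√(F (t + 1)) * (a t - a (t + 1))) + c / 2 * (‖g t‖ ^ 2 / √(F (t + 1))) := by
    intro t
    have hgF : ‖g t‖ ^ 2 ≤ F (t + 1) :=
      single_le_sum (fun k _ => sq_nonneg ‖g k‖) (self_mem_range_succ t)
    have := inner_le_of_proj_gradient_step hK proj hproj hc hy (w := w t) hgF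
    rw [← hwrec t] at this
    linarith [show √(F (t + 1)) / (2 * c) * (a t - a (t + 1))
      = 1 / (2 * c) * (√(F (t + 1)) * (a t - a (t + 1))) by ring]
  have htelescope := sum_mul_sub_succ_le_mul_sub hF (Real.sqrt_nonneg _) haD T
  have hadaptive := sum_div_sqrt_sum_range_succ_le (fun k => sq_nonneg ‖g k‖) T
  calc ∑ t ∈ range T, ⟪g t, w t - y⟫
      ≤ 1 / (2 * c) * ∑ t ∈ range T, √(F (t + 1)) * (a t - a (t + 1))
        + c / 2 * ∑ t ∈ range T, ‖g t‖ ^ 2 / √(F (t + 1)) := by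
        rw [mul_sum, mul_sum, ← sum_add_distrib]
        exact sum_le_sum fun t _ => hstep t
    _ ≤ 1 / (2 * c) * (√(F T) * (D ^ 2 - a T)) + c / 2 * (2 * √(F T)) := by gcongr
    _ ≤ (D ^ 2 / (2 * c) + c) * √(F T) := by
        have : 0 ≤ 1 / (2 * c) * (√(F T) * a T) := by positivity
        linarith [show 1 / (2 * c) * (√(F T) * D ^ 2) + c / 2 * (2 * √(F T))
          = (D ^ 2 / (2 * c) + c) * √(F T) by ring]

end Regret

theorem adagrad_norm_regret_general {d : ℕ} (K : Set (EuclideanSpace ℝ (Fin d)))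
    (hKconv : Convex ℝ K)
    (D : ℝ) (hD : ∀ x ∈ K, ∀ y ∈ K, ‖x - y‖ ≤ D)
    (proj : EuclideanSpace ℝ (Fin d) → EuclideanSpace ℝ (Fin d))
    (hproj : ∀ x, proj x ∈ K ∧ ∀ y ∈ K, ‖proj x - x‖ ≤ ‖y - x‖)
    (T : ℕ) (g : ℕ → EuclideanSpace ℝ (Fin d)) (η : ℕ → ℝ)
    (hη : ∀ t, η t = (D / Real.sqrt 2) / Real.sqrt (∑ k ∈ Finset.range (t+1), ‖g k‖^2))
    (w : ℕ → EuclideanSpace ℝ (Fin d)) (hw0 : w 0 ∈ K)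
    (hwrec : ∀ t, w (t+1) = proj (w t - η t • g t))
    (wstar : EuclideanSpace ℝ (Fin d)) (hws : wstar ∈ K) :
    ∑ t ∈ Finset.range T, ⟪g t, w t - wstar⟫
      ≤ D * Real.sqrt (2 * ∑ t ∈ Finset.range T, ‖g t‖^2) := by
  rcases (norm_nonneg _ |>.trans (hD _ hw0 _ hw0)).eq_or_lt with hD0 | hDpos
  · -- For `D = 0` the step scale vanishes, but then `K` is a single point.
    have hwK : ∀ t, w t ∈ K
      | 0 => hw0
      | t + 1 => hwrec t ▸ (hproj _).1
    have hw : ∀ t, w t = wstar := fun t =>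
      sub_eq_zero.1 (norm_le_zero_iff.1 (hD0 ▸ hD _ (hwK t) _ hws))
    simp [hw, ← hD0]
  have hwrec' := fun t => (hη t ▸ hwrec t :)
  have hc : 0 < D / √2 := by positivity
  calc ∑ t ∈ range T, ⟪g t, w t - wstar⟫
      ≤ (D ^ 2 / (2 * (D / √2)) + D / √2) * √(∑ t ∈ range T, ‖g t‖ ^ 2) :=
        adagrad_norm_regret_le hKconv hD proj hproj hc g w hw0 hwrec' hws T
    _ = D * √(2 * ∑ t ∈ range T, ‖g t‖ ^ 2) := by
        rw [Real.sqrt_mul zero_le_two]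
        field_simp
        rw [Real.sq_sqrt zero_le_two]
        ring

/-- AdaGrad-Norm regret bound over a closed convex set of diameter `D`, with
Euclidean projection `proj` and learning rate `η_t = (D/√2)/√(Σ_{k ≤ t} ‖g_k‖²)`. -/
theorem adagrad_norm_regret {d : ℕ} (K : Set (EuclideanSpace ℝ (Fin d)))
    (hKc : IsClosed K) (hKconv : Convex ℝ K)
    (D : ℝ) (hD : ∀ x ∈ K, ∀ y ∈ K, ‖x - y‖ ≤ D)
    (proj : EuclideanSpace ℝ (Fin d) → EuclideanSpace ℝ (Fin d))
    (hproj : ∀ x, proj x ∈ K ∧ ∀ y ∈ K, ‖proj x - x‖ ≤ ‖y - x‖)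
    (T : ℕ) (g : ℕ → EuclideanSpace ℝ (Fin d)) (η : ℕ → ℝ)
    (hη : ∀ t, η t = (D / Real.sqrt 2) / Real.sqrt (∑ k ∈ Finset.range (t+1), ‖g k‖^2))
    (w : ℕ → EuclideanSpace ℝ (Fin d)) (hw0 : w 0 ∈ K)
    (hwrec : ∀ t, w (t+1) = proj (w t - η t • g t))
    (wstar : EuclideanSpace ℝ (Fin d)) (hws : wstar ∈ K) :
    ∑ t ∈ Finset.range T, ⟪g t, w t - wstar⟫
      ≤ D * Real.sqrt (2 * ∑ t ∈ Finset.range T, ‖g t‖^2) :=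
  adagrad_norm_regret_general K hKconv D hD proj hproj T g η hη w hw0 hwrec wstar hws
end

section
/- Let F: ℝ^d → ℝ be L-smooth (‖∇F(x) − ∇F(y)‖ ≤ L‖x − y‖ for all x, y). For any sequences of vectors g₁, ..., g_T ∈ ℝ^d and positive non-increasing step sizes η₁ ≥ η₂ ≥ ... ≥ η_T > 0, the unprojected iterates w_{t+1} = w_t − η_t g_t satisfy Σ_{t=1}^{T} ‖∇F(w_t)‖² ≤ Δ_max/η_T + (L/2) Σ_{t=1}^{T} η_t ‖g_t‖² + Σ_{t=1}^{T} (∇F(w_t) − g_t)^⊤ ∇F(w_t), where Δ_t = F(w_t) − inf_w F(w) and Δ_max = max_{t∈[T]} Δ_t (assuming inf F > −∞). -/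
/-!
Along the line `s ↦ w_t - s η_t g_t` the Lipschitz gradient gives the descent lemma
`F(w_{t+1}) ≤ F(w_t) - η_t⟪∇F(w_t), g_t⟫ + (L/2) η_t² ‖g_t‖²`. Dividing by `η_t` and writing
`⟪∇F(w_t), g_t⟫ = ‖∇F(w_t)‖² - ⟪∇F(w_t) - g_t, ∇F(w_t)⟫` bounds `‖∇F(w_t)‖²` by
`(Δ_t - Δ_{t+1})/η_t` plus the two remaining terms. Summation by parts turns
`Σ (Δ_t - Δ_{t+1})/η_t` into a sum of the `Δ_t ≤ Δ_max` against the non-negative increments of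
`1/η_t`, which telescopes to at most `Δ_max/η_T` because `Δ_{T+1} ≥ 0`.
-/

open scoped RealInnerProductSpace

section Descent

variable {E : Type*} [NormedAddCommGroup E] [InnerProductSpace ℝ E] [CompleteSpace E]
  {F : E → ℝ} {gradF : E → E}

theorem HasGradientAt.hasDerivAt_comp_add_smul {x v G : E} {s : ℝ}
    (h : HasGradientAt F G (x + s • v)) :
    HasDerivAt (fun s : ℝ => F (x + s • v)) ⟪G, v⟫ s := by
  have hline : HasDerivAt (fun s : ℝ => x + s • v) v s := by
    simpa using ((hasDerivAt_id s).smul_const v).const_add x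
  simpa [InnerProductSpace.toDual_apply_apply, Function.comp_def] using
    h.hasFDerivAt.comp_hasDerivAt s hline

theorem le_add_inner_add_sq_norm_of_lipschitz_gradient {L : ℝ}
    (hgrad : ∀ x, HasGradientAt F (gradF x) x)
    (hLip : ∀ x y, ‖gradF x - gradF y‖ ≤ L * ‖x - y‖) (x v : E) :
    F (x + v) ≤ F x + ⟪gradF x, v⟫ + L / 2 * ‖v‖ ^ 2 := by
  set ψ : ℝ → ℝ := fun s => F (x + s • v) - s * ⟪gradF x, v⟫ - L / 2 * ‖v‖ ^ 2 * s ^ 2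
  have hψ : ∀ s, HasDerivAt ψ
      (⟪gradF (x + s • v) - gradF x, v⟫ - L * ‖v‖ ^ 2 * s) s := by
    intro s
    have := ((hgrad (x + s • v)).hasDerivAt_comp_add_smul.sub
      ((hasDerivAt_id s).mul_const ⟪gradF x, v⟫)).sub
      ((hasDerivAt_pow 2 s).const_mul (L / 2 * ‖v‖ ^ 2))
    refine this.congr_deriv ?_
    rw [inner_sub_left]
    simp only [one_mul, Nat.cast_ofNat]
    ring
  have hψ' : ∀ s ∈ interior (Set.Icc (0 : ℝ) 1), deriv ψ s ≤ 0 := by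
    intro s hs
    rw [interior_Icc] at hs
    rw [(hψ s).deriv, sub_nonpos]
    calc ⟪gradF (x + s • v) - gradF x, v⟫
        ≤ ‖gradF (x + s • v) - gradF x‖ * ‖v‖ := real_inner_le_norm _ _
      _ ≤ L * ‖s • v‖ * ‖v‖ := by
        gcongr
        simpa using hLip (x + s • v) x
      _ = L * ‖v‖ ^ 2 * s := by
        rw [norm_smul, Real.norm_of_nonneg hs.1.le]
        ring
  have hanti : AntitoneOn ψ (Set.Icc 0 1) :=
    antitoneOn_of_deriv_nonpos (convex_Icc 0 1)
      (fun s _ => (hψ s).continuousAt.continuousWithinAt)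
      (fun s _ => (hψ s).differentiableAt.differentiableWithinAt) hψ'
  have h01 := hanti (Set.left_mem_Icc.mpr zero_le_one) (Set.right_mem_Icc.mpr zero_le_one)
    zero_le_one
  simp only [ψ, zero_smul, one_smul, add_zero, zero_mul, sub_zero, one_mul, one_pow,
    mul_one, ne_eq, OfNat.ofNat_ne_zero, not_false_eq_true, zero_pow] at h01
  linarith

theorem sq_norm_gradient_le_of_gradient_step {L η : ℝ}
    (hgrad : ∀ x, HasGradientAt F (gradF x) x)
    (hLip : ∀ x y, ‖gradF x - gradF y‖ ≤ L * ‖x - y‖) (hη : 0 < η) (w g : E) :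
    ‖gradF w‖ ^ 2 ≤ (F w - F (w - η • g)) / η + L / 2 * (η * ‖g‖ ^ 2)
      + ⟪gradF w - g, gradF w⟫ := by
  have hdesc := le_add_inner_add_sq_norm_of_lipschitz_gradient hgrad hLip w (-(η • g))
  rw [← sub_eq_add_neg, inner_neg_right, real_inner_smul_right, norm_neg, norm_smul,
    Real.norm_of_nonneg hη.le] at hdesc
  have hsplit : ⟪gradF w - g, gradF w⟫ = ‖gradF w‖ ^ 2 - ⟪gradF w, g⟫ := by
    rw [inner_sub_left, real_inner_self_eq_norm_sq, real_inner_comm]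
  have hdiv : ⟪gradF w, g⟫ - L / 2 * (η * ‖g‖ ^ 2) ≤ (F w - F (w - η • g)) / η := by
    rw [le_div_iff₀ hη]
    linarith
  linarith

end Descent

theorem sum_Icc_sub_div_le_of_antitone {Δ η : ℕ → ℝ} {M : ℝ} {T : ℕ} (hT : 1 ≤ T)
    (hΔ : ∀ t ∈ Finset.Icc 1 T, Δ t ≤ M)
    (hηpos : ∀ t ∈ Finset.Icc 1 T, 0 < η t)
    (hηmono : ∀ s ∈ Finset.Icc 1 T, ∀ t ∈ Finset.Icc 1 T, s ≤ t → η t ≤ η s) :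
    ∑ t ∈ Finset.Icc 1 T, (Δ t - Δ (t + 1)) / η t ≤ (M - Δ (T + 1)) / η T := by
  induction T, hT using Nat.le_induction with
  | base =>
    simp only [Finset.Icc_self, Finset.sum_singleton]
    gcongr
    · exact (hηpos 1 (by simp)).le
    · exact hΔ 1 (by simp)
  | succ T hT ih =>
    have hsub (n : ℕ) : Finset.Icc 1 n ⊆ Finset.Icc 1 (n + 1) :=
      Finset.Icc_subset_Icc_right n.le_succ
    have hT_mem : T ∈ Finset.Icc 1 (T + 1) := Finset.mem_Icc.mpr ⟨hT, by omega⟩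
    have hT1_mem : T + 1 ∈ Finset.Icc 1 (T + 1) := Finset.mem_Icc.mpr ⟨by omega, le_rfl⟩
    have hprev := ih (fun t ht => hΔ t (hsub _ ht)) (fun t ht => hηpos t (hsub _ ht))
      (fun s hs t ht => hηmono s (hsub _ hs) t (hsub _ ht))
    have hgap : (M - Δ (T + 1)) / η T ≤ (M - Δ (T + 1)) / η (T + 1) :=
      div_le_div_of_nonneg_left (sub_nonneg.mpr (hΔ _ hT1_mem)) (hηpos _ hT1_mem)
        (hηmono _ hT_mem _ hT1_mem T.le_succ)
    rw [Finset.sum_Icc_succ_top (by omega)]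
    calc _ ≤ (M - Δ (T + 1)) / η (T + 1) + (Δ (T + 1) - Δ (T + 1 + 1)) / η (T + 1) := by
          gcongr
          exact hprev.trans hgap
      _ = _ := by ring

/-- Pathwise descent bound for unprojected updates `w_{t+1} = w_t - η_t g_t` with
non-increasing positive step sizes, for an `L`-smooth function `F` bounded below:
`Σ_t ‖∇F(w_t)‖² ≤ Δ_max/η_T + (L/2) Σ_t η_t ‖g_t‖² + Σ_t (∇F(w_t) - g_t)ᵀ∇F(w_t)`. -/
theorem smooth_descent_sum_bound {d : ℕ} (F : EuclideanSpace ℝ (Fin d) → ℝ)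
    (gradF : EuclideanSpace ℝ (Fin d) → EuclideanSpace ℝ (Fin d)) (L : ℝ)
    (hgrad : ∀ x, HasGradientAt F (gradF x) x)
    (hLip : ∀ x y, ‖gradF x - gradF y‖ ≤ L * ‖x - y‖)
    (hbdd : BddBelow (Set.range F))
    (T : ℕ) (hT : 1 ≤ T)
    (g : ℕ → EuclideanSpace ℝ (Fin d)) (η : ℕ → ℝ)
    (hηpos : ∀ t ∈ Finset.Icc 1 T, 0 < η t)
    (hηmono : ∀ s ∈ Finset.Icc 1 T, ∀ t ∈ Finset.Icc 1 T, s ≤ t → η t ≤ η s)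
    (w : ℕ → EuclideanSpace ℝ (Fin d))
    (hwrec : ∀ t, w (t+1) = w t - η t • g t) :
    ∑ t ∈ Finset.Icc 1 T, ‖gradF (w t)‖^2
      ≤ ((Finset.Icc 1 T).sup' (Finset.nonempty_Icc.mpr hT)
            (fun t => F (w t) - sInf (Set.range F))) / η T
        + (L/2) * ∑ t ∈ Finset.Icc 1 T, η t * ‖g t‖^2
        + ∑ t ∈ Finset.Icc 1 T, ⟪gradF (w t) - g t, gradF (w t)⟫ := by
  set Δ : ℕ → ℝ := fun t => F (w t) - sInf (Set.range F)
  set M := (Finset.Icc 1 T).sup' (Finset.nonempty_Icc.mpr hT) Δ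
  have hΔ_nonneg (t : ℕ) : 0 ≤ Δ t := sub_nonneg.mpr (csInf_le hbdd ⟨w t, rfl⟩)
  have hstep : ∀ t ∈ Finset.Icc 1 T, ‖gradF (w t)‖ ^ 2 ≤ (Δ t - Δ (t + 1)) / η t
      + L / 2 * (η t * ‖g t‖ ^ 2) + ⟪gradF (w t) - g t, gradF (w t)⟫ := fun t ht => by
    simpa only [Δ, hwrec, sub_sub_sub_cancel_right] using
      sq_norm_gradient_le_of_gradient_step hgrad hLip (hηpos t ht) (w t) (g t)
  have htelescope : ∑ t ∈ Finset.Icc 1 T, (Δ t - Δ (t + 1)) / η t ≤ M / η T :=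
    (sum_Icc_sub_div_le_of_antitone hT (fun t ht => Finset.le_sup' Δ ht) hηpos hηmono).trans <|
      div_le_div_of_nonneg_right (sub_le_self _ (hΔ_nonneg _)) (hηpos T (by simp [hT])).le
  calc ∑ t ∈ Finset.Icc 1 T, ‖gradF (w t)‖ ^ 2
      ≤ ∑ t ∈ Finset.Icc 1 T, ((Δ t - Δ (t + 1)) / η t + L / 2 * (η t * ‖g t‖ ^ 2)
          + ⟪gradF (w t) - g t, gradF (w t)⟫) := Finset.sum_le_sum hstep
    _ = ∑ t ∈ Finset.Icc 1 T, (Δ t - Δ (t + 1)) / η t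
          + L / 2 * ∑ t ∈ Finset.Icc 1 T, η t * ‖g t‖ ^ 2
          + ∑ t ∈ Finset.Icc 1 T, ⟪gradF (w t) - g t, gradF (w t)⟫ := by
        rw [Finset.sum_add_distrib, Finset.sum_add_distrib, Finset.mul_sum]
    _ ≤ _ := by gcongr
end

section
/- (TD gradient inequality) Consider an MRP with finite state space S, transition kernel P^π, stationary distribution μ, discount γ ∈ [0,1), bounded features φ: S → ℝ^d with ‖φ(s)‖ ≤ 1, and V_θ(s) = φ(s)^⊤θ. Define the mean TD update ḡ(θ) = E_{s~μ, s'~P^π(·|s)}[(R^π(s,s') + γ φ(s')^⊤θ − φ(s)^⊤θ) φ(s)], and let θ* satisfy ḡ(θ*) = 0. Then for all θ ∈ ℝ^d: ḡ(θ)^⊤(θ* − θ) ≥ (1 − γ) ‖V_{θ*} − V_θ‖²_M, where ‖V‖²_M = Σ_s μ(s) V(s)². -/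
open scoped RealInnerProductSpace

/-- TD gradient inequality (Bhandari–Russo–Singal, Lemma 3): for the mean TD update
`ḡ(θ) = E_{s~μ, s'~Pπ(·|s)}[(R(s,s') + γ φ(s')ᵀθ - φ(s)ᵀθ) φ(s)]` with `ḡ(θ*) = 0`,
`ḡ(θ)ᵀ(θ* - θ) ≥ (1-γ) ‖V_{θ*} - V_θ‖²_M` for all `θ`, where
`‖V‖²_M = Σ_s μ(s) V(s)²`. -/
theorem td_gradient_inequality {S : Type*} [Fintype S] {d : ℕ}
    (Pπ : S → S → ℝ) (μ : S → ℝ) (R : S → S → ℝ) (γ : ℝ) (hγ : γ ∈ Set.Ico (0:ℝ) 1)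
    (hPnn : ∀ s s', 0 ≤ Pπ s s') (hProw : ∀ s, ∑ s', Pπ s s' = 1)
    (hμnn : ∀ s, 0 ≤ μ s) (hμsum : ∑ s, μ s = 1)
    (hstat : ∀ s', ∑ s, μ s * Pπ s s' = μ s')
    (φ : S → EuclideanSpace ℝ (Fin d)) (hφ : ∀ s, ‖φ s‖ ≤ 1)
    (gbar : EuclideanSpace ℝ (Fin d) → EuclideanSpace ℝ (Fin d))
    (hgbar : ∀ θ, gbar θ =
      ∑ s, ∑ s', (μ s * Pπ s s') • ((R s s' + γ * ⟪φ s', θ⟫ - ⟪φ s, θ⟫) • φ s))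
    (θstar : EuclideanSpace ℝ (Fin d)) (hθstar : gbar θstar = 0) :
    ∀ θ, (1 - γ) * ∑ s, μ s * (⟪φ s, θstar⟫ - ⟪φ s, θ⟫)^2
      ≤ ⟪gbar θ, θstar - θ⟫ := by
  intro θ
  set V : S → ℝ := fun s => ⟪φ s, θstar⟫ - ⟪φ s, θ⟫ with hV
  have hVdef : ∀ s, ⟪φ s, θstar - θ⟫ = V s := by
    intro s; simp [hV, inner_sub_right]
  -- expand inner product of gbar with u for any parameter
  have expand : ∀ ψ : EuclideanSpace ℝ (Fin d), ⟪gbar ψ, θstar - θ⟫ =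
      ∑ s, ∑ s', (μ s * Pπ s s') * ((R s s' + γ * ⟪φ s', ψ⟫ - ⟪φ s, ψ⟫) * V s) := by
    intro ψ
    rw [hgbar]
    rw [sum_inner]
    refine Finset.sum_congr rfl fun s _ => ?_
    rw [sum_inner]
    refine Finset.sum_congr rfl fun s' _ => ?_
    rw [real_inner_smul_left, real_inner_smul_left, hVdef]
  have hzero : ⟪gbar θstar, θstar - θ⟫ = 0 := by rw [hθstar]; simp
  have key : ⟪gbar θ, θstar - θ⟫ =
      ∑ s, ∑ s', (μ s * Pπ s s') * (V s ^ 2) -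
      γ * ∑ s, ∑ s', (μ s * Pπ s s') * (V s * V s') := by
    have h1 := expand θ
    have h2 := expand θstar
    rw [hzero] at h2
    rw [h1]
    rw [Finset.mul_sum, ← Finset.sum_sub_distrib]
    rw [show (∑ s, ∑ s', (μ s * Pπ s s') * ((R s s' + γ * ⟪φ s', θ⟫ - ⟪φ s, θ⟫) * V s))
        = (∑ s, ∑ s', (μ s * Pπ s s') * ((R s s' + γ * ⟪φ s', θ⟫ - ⟪φ s, θ⟫) * V s))
          - ∑ s, ∑ s', (μ s * Pπ s s') * ((R s s' + γ * ⟪φ s', θstar⟫ - ⟪φ s, θstar⟫) * V s)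
        from by rw [← h2]; ring]
    rw [← Finset.sum_sub_distrib]
    refine Finset.sum_congr rfl fun s _ => ?_
    rw [← Finset.sum_sub_distrib, Finset.mul_sum, ← Finset.sum_sub_distrib]
    refine Finset.sum_congr rfl fun s' _ => ?_
    simp only [hV]
    ring
  have hA : ∑ s, ∑ s', (μ s * Pπ s s') * (V s ^ 2) = ∑ s, μ s * (V s)^2 := by
    refine Finset.sum_congr rfl fun s _ => ?_
    calc ∑ s', (μ s * Pπ s s') * (V s ^ 2)
        = (∑ s', Pπ s s') * (μ s * V s ^ 2) := by rw [Finset.sum_mul]; exact Finset.sum_congr rfl fun s' _ => by ring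
      _ = μ s * V s ^ 2 := by rw [hProw]; ring
  have hB : ∑ s, ∑ s', (μ s * Pπ s s') * (V s' ^ 2) = ∑ s, μ s * (V s)^2 := by
    rw [Finset.sum_comm]
    refine Finset.sum_congr rfl fun s' _ => ?_
    calc ∑ s, (μ s * Pπ s s') * (V s' ^ 2)
        = (∑ s, μ s * Pπ s s') * (V s' ^ 2) := by rw [Finset.sum_mul]
      _ = μ s' * V s' ^ 2 := by rw [hstat]
  have hC : ∑ s, ∑ s', (μ s * Pπ s s') * (V s * V s') ≤ ∑ s, μ s * (V s)^2 := by
    have step : (2:ℝ) * (∑ s, ∑ s', (μ s * Pπ s s') * (V s * V s'))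
        ≤ ∑ s, ∑ s', ((μ s * Pπ s s') * (V s ^ 2) + (μ s * Pπ s s') * (V s' ^ 2)) := by
      rw [Finset.mul_sum]
      refine Finset.sum_le_sum fun s _ => ?_
      rw [Finset.mul_sum]
      refine Finset.sum_le_sum fun s' _ => ?_
      have hw : 0 ≤ μ s * Pπ s s' := mul_nonneg (hμnn s) (hPnn s s')
      nlinarith [mul_nonneg hw (sq_nonneg (V s - V s'))]
    have hsplit : ∑ s, ∑ s', ((μ s * Pπ s s') * (V s ^ 2) + (μ s * Pπ s s') * (V s' ^ 2))
        = ∑ s, ∑ s', (μ s * Pπ s s') * (V s ^ 2) + ∑ s, ∑ s', (μ s * Pπ s s') * (V s' ^ 2) := by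
      rw [← Finset.sum_add_distrib]
      exact Finset.sum_congr rfl fun s _ => Finset.sum_add_distrib
    rw [hsplit, hA, hB] at step
    linarith
  rw [key, hA]
  have hγ0 := hγ.1
  have : γ * (∑ s, ∑ s', (μ s * Pπ s s') * (V s * V s')) ≤ γ * ∑ s, μ s * (V s)^2 :=
    mul_le_mul_of_nonneg_left hC hγ0
  linarith
end
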